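/- Let P : (0, ∞) → [0, ∞] be defined by P(t) = ∑_{i∈I} a_i^t where I is countable and 0 < a_i ≤ s < 1 for all i. Then P is nonincreasing; if moreover P(t₀) < ∞ for some t₀, then P is continuous and strictly decreasing on [t₀, ∞), P(t) → 0 as t → ∞, and if P(t₀) > 1 > P(t₁) for some t₀ < t₁, there exists a unique t̃ ∈ (t₀, t₁) with P(t̃) = 1. -/

import Mathlib

open Filter
open scoped ENNReal

/-- Pressure-type function `P t = ∑ᵢ aᵢ ^ t` (valued in `[0,∞]`) of a countable IFS with
`0 < aᵢ ≤ s < 1`: it is nonincreasing on `(0,∞)`; if finite at some `t₀ > 0`, it is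
continuous and strictly decreasing on `[t₀, ∞)`, tends to `0` at `∞`, and if
`P t₀ > 1 > P t₁` with `t₀ < t₁`, there is a unique `t̃ ∈ (t₀, t₁)` with `P t̃ = 1`. -/
theorem stmt_11 {I : Type*} [Countable I] [Nonempty I] (a : I → ℝ) (s : ℝ)
    (ha0 : ∀ i, 0 < a i) (has : ∀ i, a i ≤ s) (hs1 : s < 1) :
    AntitoneOn (fun t : ℝ => ∑' i, ENNReal.ofReal (a i ^ t)) (Set.Ioi 0) ∧
    ∀ t₀ : ℝ, 0 < t₀ → (∑' i, ENNReal.ofReal (a i ^ t₀)) < ⊤ →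
      ContinuousOn (fun t : ℝ => ∑' i, ENNReal.ofReal (a i ^ t)) (Set.Ici t₀) ∧
      StrictAntiOn (fun t : ℝ => ∑' i, ENNReal.ofReal (a i ^ t)) (Set.Ici t₀) ∧
      Tendsto (fun t : ℝ => ∑' i, ENNReal.ofReal (a i ^ t)) atTop (nhds 0) ∧
      ∀ t₁ : ℝ, t₀ < t₁ →
        1 < (∑' i, ENNReal.ofReal (a i ^ t₀)) →
        (∑' i, ENNReal.ofReal (a i ^ t₁)) < 1 →
        ∃! tt : ℝ, tt ∈ Set.Ioo t₀ t₁ ∧ (∑' i, ENNReal.ofReal (a i ^ tt)) = 1 := by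
  have ha1 : ∀ i, a i < 1 := fun i => lt_of_le_of_lt (has i) hs1
  set P : ℝ → ℝ≥0∞ := fun t => ∑' i, ENNReal.ofReal (a i ^ t) with hPdef
  have hmono : ∀ (i : I) (x y : ℝ), x ≤ y → a i ^ y ≤ a i ^ x := fun i x y hxy =>
    Real.rpow_le_rpow_of_exponent_ge (ha0 i) (le_of_lt (ha1 i)) hxy
  have hanti : ∀ x y : ℝ, x ≤ y → P y ≤ P x := by
    intro x y hxy
    exact ENNReal.tsum_le_tsum fun i => ENNReal.ofReal_le_ofReal (hmono i x y hxy)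
  refine ⟨fun x _ y _ hxy => hanti x y hxy, ?_⟩
  intro t₀ ht₀ hfin
  -- Summability facts
  have hsum : ∀ t : ℝ, t₀ ≤ t → Summable fun i => a i ^ t := by
    intro t ht
    have h0 : Summable fun i => (Real.toNNReal (a i ^ t₀)) := by
      rw [← ENNReal.tsum_coe_ne_top_iff_summable]
      simpa [ENNReal.ofReal] using hfin.ne
    have h0' : Summable fun i => a i ^ t₀ := by
      have := NNReal.summable_coe.2 h0
      simpa [Real.coe_toNNReal _ (Real.rpow_nonneg (ha0 _).le _)] using this
    exact h0'.of_nonneg_of_le (fun i => Real.rpow_nonneg (ha0 i).le _)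
      (fun i => hmono i t₀ t ht)
  have hPof : ∀ t : ℝ, t₀ ≤ t → P t = ENNReal.ofReal (∑' i, a i ^ t) := by
    intro t ht
    rw [ENNReal.ofReal_tsum_of_nonneg (fun i => Real.rpow_nonneg (ha0 i).le _) (hsum t ht)]
  -- Continuity
  have hcont : ContinuousOn P (Set.Ici t₀) := by
    have hg : ContinuousOn (fun t : ℝ => ∑' i, a i ^ t) (Set.Ici t₀) := by
      refine continuousOn_tsum (u := fun i => a i ^ t₀) ?_ (hsum t₀ le_rfl) ?_
      · intro i
        exact Continuous.continuousOn
          (continuous_iff_continuousAt.2 fun x => Real.continuousAt_const_rpow (ha0 i).ne')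
      · intro i t ht
        rw [Real.norm_eq_abs, abs_of_nonneg (Real.rpow_nonneg (ha0 i).le _)]
        exact hmono i t₀ t ht
    have : ContinuousOn (fun t => ENNReal.ofReal (∑' i, a i ^ t)) (Set.Ici t₀) :=
      ENNReal.continuous_ofReal.comp_continuousOn hg
    exact this.congr hPof
  -- Strict antitonicity
  have hstrict : StrictAntiOn P (Set.Ici t₀) := by
    intro x hx y hy hxy
    obtain ⟨i₀⟩ := ‹Nonempty I›
    refine ENNReal.tsum_lt_tsum (i := i₀) ?_ (fun i => ENNReal.ofReal_le_ofReal
      (hmono i x y hxy.le)) ?_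
    · exact ((hanti t₀ y (le_trans hx hxy.le)).trans_lt hfin).ne
    · rw [ENNReal.ofReal_lt_ofReal_iff (Real.rpow_pos_of_pos (ha0 i₀) _)]
      exact Real.rpow_lt_rpow_of_exponent_gt (ha0 i₀) (ha1 i₀) hxy
  -- Tendsto 0
  have hs0 : 0 < s := lt_of_lt_of_le (ha0 (Classical.arbitrary I)) (has _)
  have hbound : ∀ t : ℝ, t₀ ≤ t → P t ≤ ENNReal.ofReal (s ^ (t - t₀)) * P t₀ := by
    intro t ht
    have : ∀ i, ENNReal.ofReal (a i ^ t) ≤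
        ENNReal.ofReal (s ^ (t - t₀)) * ENNReal.ofReal (a i ^ t₀) := by
      intro i
      rw [← ENNReal.ofReal_mul (Real.rpow_nonneg hs0.le _)]
      apply ENNReal.ofReal_le_ofReal
      have : a i ^ t = a i ^ (t - t₀) * a i ^ t₀ := by
        rw [← Real.rpow_add (ha0 i)]; ring_nf
      rw [this]
      exact mul_le_mul_of_nonneg_right
        (Real.rpow_le_rpow (ha0 i).le (has i) (by linarith))
        (Real.rpow_nonneg (ha0 i).le _)
    calc P t ≤ ∑' i, ENNReal.ofReal (s ^ (t - t₀)) * ENNReal.ofReal (a i ^ t₀) :=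
          ENNReal.tsum_le_tsum this
      _ = ENNReal.ofReal (s ^ (t - t₀)) * P t₀ := ENNReal.tsum_mul_left
  have htend : Tendsto P atTop (nhds 0) := by
    have h1 : Tendsto (fun t : ℝ => s ^ (t - t₀)) atTop (nhds 0) := by
      exact (tendsto_rpow_atTop_of_base_lt_one s (by linarith) hs1).comp
        (tendsto_atTop_add_const_right atTop (-t₀) tendsto_id)
    have h2 : Tendsto (fun t : ℝ => ENNReal.ofReal (s ^ (t - t₀)) * P t₀) atTop (nhds 0) := by
      have := (ENNReal.continuous_ofReal.tendsto 0).comp h1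
      rw [ENNReal.ofReal_zero] at this
      simpa using ENNReal.Tendsto.mul_const this (Or.inr hfin.ne)
    refine tendsto_of_tendsto_of_tendsto_of_le_of_le' tendsto_const_nhds h2
      (Eventually.of_forall fun t => zero_le) ?_
    filter_upwards [eventually_ge_atTop t₀] with t ht using hbound t ht
  refine ⟨hcont, hstrict, htend, ?_⟩
  -- IVT part
  intro t₁ ht01 h1 h1'
  have hsub : Set.Icc t₀ t₁ ⊆ Set.Ici t₀ := Set.Icc_subset_Ici_self
  have hivt := intermediate_value_Icc' ht01.le (hcont.mono hsub)
  have h1mem : (1 : ℝ≥0∞) ∈ Set.Icc (P t₁) (P t₀) := ⟨h1'.le, h1.le⟩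
  obtain ⟨tt, httm, htt⟩ := hivt h1mem
  have htt0 : t₀ < tt := by
    rcases lt_or_eq_of_le httm.1 with h | h
    · exact h
    · exfalso; rw [← h] at htt; exact absurd htt h1.ne'
  have htt1 : tt < t₁ := by
    rcases lt_or_eq_of_le httm.2 with h | h
    · exact h
    · exfalso; rw [h] at htt; exact absurd htt h1'.ne
  refine ⟨tt, ⟨⟨htt0, htt1⟩, htt⟩, ?_⟩
  rintro tt' ⟨⟨htt0', htt1'⟩, htt'⟩
  by_contra hne
  rcases lt_or_gt_of_ne hne with h | h
  · have := hstrict (Set.mem_Ici.2 htt0'.le) (Set.mem_Ici.2 htt0.le) h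
    rw [htt] at this; exact this.ne' htt'
  · have := hstrict (Set.mem_Ici.2 htt0.le) (Set.mem_Ici.2 htt0'.le) h
    rw [htt] at this; exact this.ne htt'
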